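/- (Deterministic core of Theorem 1.) Let p be a probability distribution on {0,1}^n with Σ_x p(x)² ≤ α/2^n for some α ≥ 1. Let 0 < δ < 1 and 0 < ε < 1, and suppose λ > 0 satisfies 1 ≤ ε/λ ≤ 1 + 1/((10√α/δ) log(10√α/δ)). Set c = ⌈(1/λ) log(10√α/δ)⌉ and F = 10(n^c + 1)/δ. Suppose p̂' : {0,1}^n → ℝ satisfies p̂'(0^n) = 2^{-n} and |p̂(s) − p̂'(s)| ≤ 1/(2^n F) for every s with 1 ≤ |s| ≤ c. Define q(x) = Σ_{s: |s| ≤ c} (1−λ)^{|s|} p̂'(s) (−1)^{s·x} and p̃_A(x) = Σ_{s∈{0,1}^n} (1−ε)^{|s|} p̂(s) (−1)^{s·x}, and let r be a probability distribution on {0,1}^n with ||q − r||_1 = 2 Σ_{x: q(x) < 0} |q(x)|. Then ||p̃_A − r||_1 ≤ δ. -/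

import Mathlib

/-- Dot product of two bit strings, `s·x = Σ_j s_j x_j`. -/
def dot {n : ℕ} (s x : Fin n → Bool) : ℕ :=
  (Finset.univ.filter fun j => s j && x j).card

/-- Hamming weight `|s| = Σ_j s_j`. -/
def wt {n : ℕ} (s : Fin n → Bool) : ℕ :=
  (Finset.univ.filter fun j => s j).card

/-- Fourier coefficient `f̂(s) = 2^{-n} Σ_x f(x) (-1)^{s·x}`. -/
noncomputable def fhat {n : ℕ} (f : (Fin n → Bool) → ℝ) (s : Fin n → Bool) : ℝ :=
  (1 / 2 ^ n) * ∑ x, f x * (-1 : ℝ) ^ dot s x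

/-- The `l1` norm `‖f‖₁ = Σ_x |f(x)|`. -/
noncomputable def l1 {n : ℕ} (f : (Fin n → Bool) → ℝ) : ℝ :=
  ∑ x, |f x|

/-!
In the Walsh basis, `p̃_A - q` splits into a damping error with coefficients
`((1-ε)^|s| - [|s| ≤ c] (1-λ)^|s|) p̂(s)` and an estimation error with coefficients
`[|s| ≤ c] (1-λ)^|s| (p̂(s) - p̂'(s))`, which vanishes at `s = 0`. Each damping multiplier is
at most `1/A = δ/(10√α)`: for `|s| ≤ c` because `ε/λ` is close to `1`, and for `|s| > c`
because `(1-λ)^c ≤ 2^{-λc} ≤ 1/A`. Cauchy–Schwarz and Parseval together with `Σ p² ≤ α/2^n`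
bound the first error by `δ/10`; the second has at most `n^c` nonzero coefficients, each at most
`1/(2^n F)`, so it is below `n^c/F < δ/10`. Finally `p̃_A` is `p` averaged against the
nonnegative kernel `∏_j (1 ± (1-ε))`, so `p̃_A ≥ 0`, the negative part of `q` is pointwise at
most `|p̃_A - q|`, and `‖p̃_A - r‖₁ ≤ ‖p̃_A - q‖₁ + ‖q - r‖₁ ≤ 3 ‖p̃_A - q‖₁ ≤ δ`.
-/

open Finset

/- The left side is the `i = 1` term of the binomial expansion of `(t + (1 - t)) ^ k = 1`. -/
lemma natCast_mul_mul_one_sub_pow_pred_le_one {t : ℝ} (h0 : 0 ≤ t) (h1 : t ≤ 1) (k : ℕ) :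
    k * t * (1 - t) ^ (k - 1) ≤ 1 := by
  cases k with
  | zero => simp
  | succ m =>
    have hbinom := add_pow t (1 - t) (m + 1)
    rw [add_sub_cancel, one_pow] at hbinom
    have hterm := single_le_sum
      (f := fun i => t ^ i * (1 - t) ^ (m + 1 - i) * ((m + 1).choose i : ℝ))
      (fun i _ => by have := sub_nonneg.2 h1; positivity) (mem_range.2 (by omega : 1 < m + 1 + 1))
    simp only [pow_one, Nat.choose_one_right, Nat.add_sub_cancel, ← hbinom] at hterm
    push_cast at hterm ⊢
    linarith

lemma one_sub_pow_le_two_rpow_neg {t : ℝ} (h0 : 0 ≤ t) (h1 : t ≤ 1) (c : ℕ) :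
    (1 - t) ^ c ≤ (2 : ℝ) ^ (-(t * c)) := by
  have hbase : 1 - t ≤ (2 : ℝ) ^ (-t) := by
    rw [Real.rpow_def_of_pos two_pos]
    calc 1 - t ≤ Real.exp (-t) := by linarith [Real.add_one_le_exp (-t)]
      _ ≤ Real.exp (Real.log 2 * -t) := by
          gcongr
          nlinarith [Real.log_two_lt_d9]
  calc (1 - t) ^ c ≤ ((2 : ℝ) ^ (-t)) ^ c := by gcongr
    _ = (2 : ℝ) ^ (-(t * c)) := by
        rw [← Real.rpow_natCast, ← Real.rpow_mul two_pos.le, neg_mul]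

lemma abs_one_sub_pow_sub_ite_le {ε t A : ℝ} {c : ℕ} (ht : 0 < t) (htε : t ≤ ε)
    (hε : ε ≤ 1) (hA : 2 ≤ A) (hratio : ε / t ≤ 1 + 1 / (A * Real.logb 2 A))
    (hc : Real.logb 2 A / t ≤ c) (k : ℕ) :
    |(1 - ε) ^ k - (if k ≤ c then (1 - t) ^ k else 0)| ≤ 1 / A := by
  have hlog : 1 ≤ Real.logb 2 A := by
    rw [Real.le_logb_iff_rpow_le one_lt_two (by linarith)]; simpa using hA
  have htc : Real.logb 2 A ≤ t * c := by rwa [div_le_iff₀ ht, mul_comm] at hc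
  have hεt : 0 ≤ 1 - ε := by linarith
  have hmono : (1 - ε) ^ k ≤ (1 - t) ^ k := by gcongr
  split_ifs with hk
  · calc |(1 - ε) ^ k - (1 - t) ^ k|
        ≤ |(1 - ε) - (1 - t)| * k * max |1 - ε| |1 - t| ^ (k - 1) := abs_pow_sub_pow_le ..
      _ = k * t * (1 - t) ^ (k - 1) * (ε / t - 1) := by
          rw [abs_of_nonneg hεt, abs_of_nonneg (by linarith : 0 ≤ 1 - t),
            max_eq_right (by linarith), abs_of_nonpos (by linarith)]
          field_simp; ring
      _ ≤ 1 * (1 / (A * Real.logb 2 A)) := by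
          gcongr
          · exact sub_nonneg.2 ((one_le_div ht).2 htε)
          · exact natCast_mul_mul_one_sub_pow_pred_le_one ht.le (by linarith) k
          · linarith
      _ ≤ 1 / A := by
          rw [one_mul]; gcongr; nlinarith
  · calc |(1 - ε) ^ k - 0| = (1 - ε) ^ k := by rw [sub_zero, abs_of_nonneg (by positivity)]
      _ ≤ (1 - t) ^ c := hmono.trans (pow_le_pow_of_le_one (by linarith) (by linarith) (by omega))
      _ ≤ (2 : ℝ) ^ (-(t * c)) := one_sub_pow_le_two_rpow_neg ht.le (by linarith) c
      _ ≤ (2 : ℝ) ^ (-Real.logb 2 A) := by gcongr; norm_num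
      _ = 1 / A := by
          rw [Real.rpow_neg zero_le_two, Real.rpow_logb two_pos (by norm_num) (by linarith),
            one_div]

section Walsh

variable {n : ℕ}

noncomputable def walshSum (b : (Fin n → Bool) → ℝ) (x : Fin n → Bool) : ℝ :=
  ∑ s, b s * (-1 : ℝ) ^ dot s x

lemma dot_comm (s x : Fin n → Bool) : dot s x = dot x s := by
  simp only [dot, Bool.and_comm]

lemma pow_card_filter_eq_prod {ι M : Type*} [Fintype ι] [CommMonoid M] (P : ι → Prop)
    [DecidablePred P] (a : M) :
    a ^ #{j | P j} = ∏ j, if P j then a else 1 := by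
  rw [prod_ite, prod_const, prod_const, one_pow, mul_one]

lemma pow_wt_mul_neg_one_pow_dot_mul (a : ℝ) (s x y : Fin n → Bool) :
    a ^ wt s * ((-1 : ℝ) ^ dot s x * (-1 : ℝ) ^ dot s y) =
      ∏ j, if s j then (if x j = y j then a else -a) else 1 := by
  rw [wt, dot, dot, pow_card_filter_eq_prod, pow_card_filter_eq_prod, pow_card_filter_eq_prod,
    ← prod_mul_distrib, ← prod_mul_distrib]
  refine prod_congr rfl fun j _ => ?_
  cases s j <;> cases x j <;> cases y j <;> simp

lemma sum_pow_wt_mul_neg_one_pow_dot_mul (a : ℝ) (x y : Fin n → Bool) :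
    ∑ s, a ^ wt s * ((-1 : ℝ) ^ dot s x * (-1 : ℝ) ^ dot s y) =
      ∏ j, (1 + if x j = y j then a else -a) := by
  simp_rw [pow_wt_mul_neg_one_pow_dot_mul]
  rw [← Fintype.prod_sum (fun j (b : Bool) => if b then (if x j = y j then a else -a) else 1)]
  simp [add_comm]

lemma prod_one_add_ite_eq (x y : Fin n → Bool) :
    ∏ j, (1 + if x j = y j then (1 : ℝ) else -1) = if x = y then 2 ^ n else 0 := by
  split_ifs with hxy
  · simp only [hxy, if_true]; norm_num
  · obtain ⟨j, hj⟩ := Function.ne_iff.mp hxy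
    exact prod_eq_zero (mem_univ j) (by simp [hj])

lemma sum_neg_one_pow_dot_mul_neg_one_pow_dot (x y : Fin n → Bool) :
    ∑ s, (-1 : ℝ) ^ dot s x * (-1 : ℝ) ^ dot s y = if x = y then 2 ^ n else 0 := by
  simpa [prod_one_add_ite_eq] using sum_pow_wt_mul_neg_one_pow_dot_mul 1 x y

lemma wt_eq_zero_iff {s : Fin n → Bool} : wt s = 0 ↔ s = fun _ => false := by
  simp [wt, funext_iff]

lemma fhat_const_false (f : (Fin n → Bool) → ℝ) :
    fhat f (fun _ => false) = 1 / 2 ^ n * ∑ x, f x := by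
  simp [fhat, dot]

lemma walshSum_pow_wt_mul_fhat (a : ℝ) (f : (Fin n → Bool) → ℝ) (x : Fin n → Bool) :
    walshSum (fun s => a ^ wt s * fhat f s) x =
      1 / 2 ^ n * ∑ y, f y * ∏ j, (1 + if y j = x j then a else -a) := by
  simp_rw [← sum_pow_wt_mul_neg_one_pow_dot_mul, walshSum, fhat, mul_sum, sum_mul]
  rw [sum_comm]
  refine sum_congr rfl fun y _ => sum_congr rfl fun s _ => by ring

lemma walshSum_fhat (f : (Fin n → Bool) → ℝ) (x : Fin n → Bool) :
    walshSum (fhat f) x = f x := by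
  have h := walshSum_pow_wt_mul_fhat 1 f x
  simp only [one_pow, one_mul, prod_one_add_ite_eq, mul_ite, mul_zero, sum_ite_eq'] at h
  rw [h, if_pos (mem_univ x)]
  field_simp

lemma walshSum_pow_wt_mul_fhat_nonneg {a : ℝ} (ha0 : -1 ≤ a) (ha1 : a ≤ 1)
    {f : (Fin n → Bool) → ℝ} (hf : ∀ x, 0 ≤ f x) (x : Fin n → Bool) :
    0 ≤ walshSum (fun s => a ^ wt s * fhat f s) x := by
  rw [walshSum_pow_wt_mul_fhat]
  refine mul_nonneg (by positivity) (sum_nonneg fun y _ => mul_nonneg (hf y) ?_)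
  exact prod_nonneg fun j _ => by split_ifs <;> linarith

lemma sum_walshSum_sq (b : (Fin n → Bool) → ℝ) :
    ∑ x, walshSum b x ^ 2 = 2 ^ n * ∑ s, b s ^ 2 := by
  have horth : ∀ s t : Fin n → Bool,
      ∑ x, (-1 : ℝ) ^ dot s x * (-1 : ℝ) ^ dot t x = if s = t then 2 ^ n else 0 := by
    intro s t
    simp_rw [dot_comm s, dot_comm t]
    exact sum_neg_one_pow_dot_mul_neg_one_pow_dot s t
  calc ∑ x, walshSum b x ^ 2
      = ∑ s, ∑ t, b s * b t * ∑ x, (-1 : ℝ) ^ dot s x * (-1 : ℝ) ^ dot t x := by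
        simp_rw [walshSum, sq, sum_mul_sum, mul_sum]
        rw [sum_comm]
        refine sum_congr rfl fun s _ => ?_
        rw [sum_comm]
        refine sum_congr rfl fun t _ => sum_congr rfl fun x _ => by ring
    _ = 2 ^ n * ∑ s, b s ^ 2 := by
        simp [horth, mul_sum, sq, mul_comm]

lemma sum_fhat_sq (f : (Fin n → Bool) → ℝ) :
    ∑ s, fhat f s ^ 2 = (∑ x, f x ^ 2) / 2 ^ n := by
  simp_rw [← walshSum_fhat f, sum_walshSum_sq]
  field_simp


lemma l1_add_le (f g : (Fin n → Bool) → ℝ) : l1 (fun x => f x + g x) ≤ l1 f + l1 g := by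
  rw [l1, l1, l1, ← sum_add_distrib]
  exact sum_le_sum fun x _ => abs_add_le _ _

lemma sq_l1_le (f : (Fin n → Bool) → ℝ) : l1 f ^ 2 ≤ 2 ^ n * ∑ x, f x ^ 2 := by
  simpa [l1, sq_abs] using sq_sum_le_card_mul_sum_sq (s := univ) (f := fun x => |f x|)

lemma l1_walshSum_le (b : (Fin n → Bool) → ℝ) : l1 (walshSum b) ≤ 2 ^ n * ∑ s, |b s| := by
  calc l1 (walshSum b) ≤ ∑ _x : Fin n → Bool, ∑ s, |b s| := by
        refine sum_le_sum fun x _ => (abs_sum_le_sum_abs _ _).trans_eq ?_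
        simp [abs_mul]
    _ = 2 ^ n * ∑ s, |b s| := by
        rw [sum_const, card_univ, Fintype.card_fun, Fintype.card_bool, Fintype.card_fin,
          nsmul_eq_mul]
        push_cast; ring

lemma sq_l1_walshSum_le {b f : (Fin n → Bool) → ℝ} {E : ℝ}
    (hb : ∀ s, |b s| ≤ E * |fhat f s|) :
    l1 (walshSum b) ^ 2 ≤ E ^ 2 * 2 ^ n * ∑ x, f x ^ 2 := by
  have hb2 : ∀ s, b s ^ 2 ≤ E ^ 2 * fhat f s ^ 2 := fun s => by
    have h := pow_le_pow_left₀ (abs_nonneg _) (hb s) 2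
    rwa [sq_abs, mul_pow, sq_abs] at h
  calc l1 (walshSum b) ^ 2 ≤ 2 ^ n * (2 ^ n * ∑ s, b s ^ 2) := by
        rw [← sum_walshSum_sq]; exact sq_l1_le _
    _ ≤ 2 ^ n * (2 ^ n * ∑ s, E ^ 2 * fhat f s ^ 2) := by gcongr with s; exact hb2 s
    _ = E ^ 2 * 2 ^ n * ∑ x, f x ^ 2 := by
        rw [← mul_sum, sum_fhat_sq]; field_simp

/- Every `s` with `1 ≤ |s| ≤ c` is the indicator of the range of some map `Fin c → Fin n`. -/
lemma card_filter_one_le_wt_le_le_pow (c : ℕ) :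
    #{s : Fin n → Bool | 1 ≤ wt s ∧ wt s ≤ c} ≤ n ^ c := by
  calc #{s : Fin n → Bool | 1 ≤ wt s ∧ wt s ≤ c}
      ≤ #(univ : Finset (Fin c → Fin n)) := by
        refine card_le_card_of_surjOn (fun g j => decide (j ∈ Set.range g)) ?_
        intro s hs
        simp only [coe_filter, mem_univ, true_and, Set.mem_ofPred_eq] at hs
        have hcard : Fintype.card {j // s j} = wt s := by simp [wt, Fintype.card_subtype]
        have : Nonempty {j // s j} := Fintype.card_pos_iff.1 (by omega)
        obtain ⟨e⟩ := Function.Embedding.nonempty_of_card_le (α := {j // s j}) (β := Fin c)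
          (by rw [hcard, Fintype.card_fin]; exact hs.2)
        have hrange : Set.range (Subtype.val ∘ Function.invFun e) = {j | s j} := by
          rw [Set.range_comp, (Function.invFun_surjective e.injective).range_eq, Set.image_univ,
            Subtype.range_val_subtype]
        exact ⟨Subtype.val ∘ Function.invFun e, mem_coe.2 (mem_univ _),
          funext fun j => by simp [hrange]⟩
    _ = n ^ c := by simp

lemma sum_abs_le_pow_mul_of_support {b : (Fin n → Bool) → ℝ} {c : ℕ} {η : ℝ}
    (hη : 0 ≤ η) (hb0 : ∀ s, ¬(1 ≤ wt s ∧ wt s ≤ c) → b s = 0)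
    (hb : ∀ s, 1 ≤ wt s → wt s ≤ c → |b s| ≤ η) :
    ∑ s, |b s| ≤ n ^ c * η := by
  calc ∑ s, |b s| = ∑ s ∈ {s | 1 ≤ wt s ∧ wt s ≤ c}, |b s| := by
        refine (sum_subset (subset_univ _) fun s _ hs => ?_).symm
        simp [hb0 s (by simpa using hs)]
    _ ≤ #{s : Fin n → Bool | 1 ≤ wt s ∧ wt s ≤ c} * η := by
        rw [← nsmul_eq_mul]
        exact sum_le_card_nsmul _ _ _ fun s hs => by simp at hs; exact hb s hs.1 hs.2
    _ ≤ n ^ c * η := by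
        gcongr; exact_mod_cast card_filter_one_le_wt_le_le_pow c

lemma l1_walshSum_mul_fhat_le {f : (Fin n → Bool) → ℝ} {m : ℕ → ℝ} {E α : ℝ}
    (hm : ∀ k, |m k| ≤ E) (hα : 0 ≤ α) (hf : ∑ x, f x ^ 2 ≤ α / 2 ^ n) :
    l1 (walshSum fun s => m (wt s) * fhat f s) ≤ E * √α := by
  have hE : 0 ≤ E := (abs_nonneg _).trans (hm 0)
  have hsq : l1 (walshSum fun s => m (wt s) * fhat f s) ^ 2 ≤ (E * √α) ^ 2 :=
    calc _ ≤ E ^ 2 * 2 ^ n * ∑ x, f x ^ 2 :=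
          sq_l1_walshSum_le fun s => by rw [abs_mul]; gcongr; exact hm _
      _ ≤ E ^ 2 * 2 ^ n * (α / 2 ^ n) := by gcongr
      _ = (E * √α) ^ 2 := by rw [mul_pow, Real.sq_sqrt hα]; field_simp
  exact (pow_le_pow_iff_left₀ (sum_nonneg fun _ _ => abs_nonneg _) (by positivity)
    two_ne_zero).1 hsq

lemma l1_walshSum_ite_mul_sub_le {f g : (Fin n → Bool) → ℝ} {t η : ℝ} {c : ℕ}
    (ht0 : 0 ≤ t) (ht1 : t ≤ 1) (hη : 0 ≤ η) (h0 : f (fun _ => false) = g (fun _ => false))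
    (hfg : ∀ s, 1 ≤ wt s → wt s ≤ c → |f s - g s| ≤ η) :
    l1 (walshSum fun s => if wt s ≤ c then (1 - t) ^ wt s * (f s - g s) else 0) ≤
      2 ^ n * (n ^ c * η) := by
  refine (l1_walshSum_le _).trans (mul_le_mul_of_nonneg_left ?_ (by positivity))
  refine sum_abs_le_pow_mul_of_support hη (fun s hs => ?_) (fun s h1 h2 => ?_)
  · by_cases hsc : wt s ≤ c
    · obtain rfl : s = fun _ => false := wt_eq_zero_iff.1 (by omega)
      simp [h0]
    · simp [hsc]
  · have hpow : |(1 - t) ^ wt s| ≤ 1 := by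
      rw [abs_of_nonneg (pow_nonneg (by linarith) _)]
      exact pow_le_one₀ (by linarith) (by linarith)
    simpa [h2, abs_mul] using mul_le_mul hpow (hfg s h1 h2) (abs_nonneg _) zero_le_one

lemma l1_sub_le_three_mul {P q r : (Fin n → Bool) → ℝ} (hP : ∀ x, 0 ≤ P x)
    (hqr : l1 (fun x => q x - r x) = 2 * ∑ x ∈ {x | q x < 0}, |q x|) :
    l1 (fun x => P x - r x) ≤ 3 * l1 (fun x => P x - q x) := by
  have hneg : ∑ x ∈ {x | q x < 0}, |q x| ≤ l1 (fun x => P x - q x) := by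
    calc ∑ x ∈ {x | q x < 0}, |q x| ≤ ∑ x ∈ {x | q x < 0}, |P x - q x| := by
          refine sum_le_sum fun x hx => ?_
          have hqx : q x < 0 := (mem_filter.1 hx).2
          rw [abs_of_neg hqx]
          exact (by linarith [hP x] : -q x ≤ P x - q x).trans (le_abs_self _)
      _ ≤ l1 (fun x => P x - q x) :=
          sum_le_sum_of_subset_of_nonneg (subset_univ _) fun _ _ _ => abs_nonneg _
  calc l1 (fun x => P x - r x) ≤ l1 (fun x => P x - q x) + l1 (fun x => q x - r x) := by
        simpa using l1_add_le (fun x => P x - q x) (fun x => q x - r x)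
    _ ≤ 3 * l1 (fun x => P x - q x) := by linarith

end Walsh

theorem stmt7_general {n : ℕ} (p phat' q ptA r : (Fin n → Bool) → ℝ) (α δ ε lam : ℝ)
    (hp0 : ∀ x, 0 ≤ p x) (hp1 : ∑ x, p x = 1)
    (hα : 1 ≤ α) (hp2 : ∑ x, p x ^ 2 ≤ α / 2 ^ n)
    (hδ0 : 0 < δ) (hδ1 : δ < 1) (hε1 : ε < 1) (hlam : 0 < lam)
    (hratio1 : 1 ≤ ε / lam)
    (hratio2 : ε / lam
      ≤ 1 + 1 / ((10 * Real.sqrt α / δ) * Real.logb 2 (10 * Real.sqrt α / δ)))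
    (c : ℕ) (hc : c = ⌈(1 / lam) * Real.logb 2 (10 * Real.sqrt α / δ)⌉₊)
    (F : ℝ) (hF : F = 10 * ((n : ℝ) ^ c + 1) / δ)
    (h0 : phat' (fun _ => false) = 1 / 2 ^ n)
    (happrox : ∀ s, 1 ≤ wt s → wt s ≤ c → |fhat p s - phat' s| ≤ 1 / (2 ^ n * F))
    (hq : ∀ x, q x = ∑ s ∈ Finset.univ.filter (fun s : Fin n → Bool => wt s ≤ c),
        (1 - lam) ^ wt s * phat' s * (-1 : ℝ) ^ dot s x)
    (hA : ∀ x, ptA x = ∑ s, (1 - ε) ^ wt s * fhat p s * (-1 : ℝ) ^ dot s x)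
    (hqr : l1 (fun x => q x - r x)
      = 2 * ∑ x ∈ Finset.univ.filter (fun x : Fin n → Bool => q x < 0), |q x|) :
    l1 (fun x => ptA x - r x) ≤ δ := by
  set A := 10 * √α / δ with hA_def
  have hA2 : 2 ≤ A := by
    rw [hA_def, le_div_iff₀ hδ0]; nlinarith [Real.one_le_sqrt.2 hα]
  have hlamε : lam ≤ ε := (one_le_div hlam).1 hratio1
  have hmult := abs_one_sub_pow_sub_ite_le (c := c) hlam hlamε hε1.le hA2 hratio2
    (by rw [hc, ← one_div_mul_eq_div]; exact Nat.le_ceil _)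
  set b₁ : (Fin n → Bool) → ℝ := fun s =>
    ((1 - ε) ^ wt s - if wt s ≤ c then (1 - lam) ^ wt s else 0) * fhat p s
  set b₂ : (Fin n → Bool) → ℝ := fun s =>
    if wt s ≤ c then (1 - lam) ^ wt s * (fhat p s - phat' s) else 0
  have hsplit : ∀ x, ptA x - q x = walshSum b₁ x + walshSum b₂ x := fun x => by
    rw [hA, hq, sum_filter, walshSum, walshSum, ← sum_add_distrib, ← sum_sub_distrib]
    refine sum_congr rfl fun s _ => ?_
    simp only [b₁, b₂]
    split_ifs <;> ring
  have h₁ : l1 (walshSum b₁) ≤ δ / 10 :=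
    calc l1 (walshSum b₁) ≤ 1 / A * √α := l1_walshSum_mul_fhat_le
          (m := fun k => (1 - ε) ^ k - if k ≤ c then (1 - lam) ^ k else 0) hmult (by linarith) hp2
      _ = δ / 10 := by rw [hA_def]; field_simp
  have h₂ : l1 (walshSum b₂) ≤ δ / 10 := by
    have hF0 : 0 < F := by rw [hF]; positivity
    calc l1 (walshSum b₂) ≤ 2 ^ n * (n ^ c * (1 / (2 ^ n * F))) :=
          l1_walshSum_ite_mul_sub_le hlam.le (by linarith) (by positivity)
            (by rw [fhat_const_false, hp1, h0, mul_one]) happrox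
      _ ≤ δ / 10 := by rw [hF]; field_simp; linarith
  have hptA : ∀ x, 0 ≤ ptA x := fun x => by
    rw [hA]; exact walshSum_pow_wt_mul_fhat_nonneg (by linarith) (by linarith) hp0 x
  calc l1 (fun x => ptA x - r x) ≤ 3 * l1 (fun x => ptA x - q x) := l1_sub_le_three_mul hptA hqr
    _ ≤ 3 * (δ / 10 + δ / 10) := by
        simp_rw [hsplit]; gcongr; exact (l1_add_le _ _).trans (add_le_add h₁ h₂)
    _ ≤ δ := by linarith

theorem stmt7 {n : ℕ} (p phat' q ptA r : (Fin n → Bool) → ℝ) (α δ ε lam : ℝ)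
    (hp0 : ∀ x, 0 ≤ p x) (hp1 : ∑ x, p x = 1)
    (hα : 1 ≤ α) (hp2 : ∑ x, p x ^ 2 ≤ α / 2 ^ n)
    (hδ0 : 0 < δ) (hδ1 : δ < 1) (hε0 : 0 < ε) (hε1 : ε < 1) (hlam : 0 < lam)
    (hratio1 : 1 ≤ ε / lam)
    (hratio2 : ε / lam
      ≤ 1 + 1 / ((10 * Real.sqrt α / δ) * Real.logb 2 (10 * Real.sqrt α / δ)))
    (c : ℕ) (hc : c = ⌈(1 / lam) * Real.logb 2 (10 * Real.sqrt α / δ)⌉₊)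
    (F : ℝ) (hF : F = 10 * ((n : ℝ) ^ c + 1) / δ)
    (h0 : phat' (fun _ => false) = 1 / 2 ^ n)
    (happrox : ∀ s, 1 ≤ wt s → wt s ≤ c → |fhat p s - phat' s| ≤ 1 / (2 ^ n * F))
    (hq : ∀ x, q x = ∑ s ∈ Finset.univ.filter (fun s : Fin n → Bool => wt s ≤ c),
        (1 - lam) ^ wt s * phat' s * (-1 : ℝ) ^ dot s x)
    (hA : ∀ x, ptA x = ∑ s, (1 - ε) ^ wt s * fhat p s * (-1 : ℝ) ^ dot s x)
    (hr0 : ∀ x, 0 ≤ r x) (hr1 : ∑ x, r x = 1)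
    (hqr : l1 (fun x => q x - r x)
      = 2 * ∑ x ∈ Finset.univ.filter (fun x : Fin n → Bool => q x < 0), |q x|) :
    l1 (fun x => ptA x - r x) ≤ δ :=
  stmt7_general p phat' q ptA r α δ ε lam hp0 hp1 hα hp2 hδ0 hδ1 hε1 hlam hratio1 hratio2 c hc F hF
    h0 happrox hq hA hqr
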